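/- arXiv:1703.03800 — 4 statements merged into one kernel-verified Lean document; each statement's English description precedes it below -/
import Mathlib

section
/- For every integer k ≥ 2, the edge set of the complete graph K_{4k} can be partitioned into k+1 subgraphs G_1, …, G_{k+1} each of girth at least 4, where each of G_1, …, G_k has exactly 8k−4 edges and G_{k+1} is a perfect matching (with 2k edges). -/
/-!
Split the vertices of `K_{4k}` into `2k` pairs indexed by `ℤ/2k`. An edge inside a pair goes to the
perfect matching; an edge between the pairs `p ≠ q` gets the colour `⌊s / 2⌋ < k`, where
`s ∈ [0, 2k)` represents `p + q`. Colour class `c` is the blow-up, with each vertex replaced by an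
independent pair, of the graph on `ℤ/2k` whose edges are the `{p, q}` with `p + q ∈ {2c, 2c + 1}`.
That graph is triangle-free, as two of the three pair sums of a triangle would coincide and force
two of its vertices to coincide. It has `(k - 1) + k = 2k - 1` edges, since `2p = 2c` has the two
solutions `c, c + k` while `2p = 2c + 1` has none, so the blow-up has `4 (2k - 1) = 8k - 4` edges.
-/

open Finset SimpleGraph

namespace SimpleGraph

variable {V W ι : Type*}

theorem CliqueFree.of_hom {G : SimpleGraph V} {H : SimpleGraph W} {n : ℕ} (f : G →g H)
    (h : H.CliqueFree n) : G.CliqueFree n := by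
  classical
  intro t ht
  have hinj : Set.InjOn f t := fun x hx y hy hxy => by
    by_contra hne
    exact (f.map_adj (ht.isClique hx hy hne)).ne hxy
  refine h (t.image f) ⟨?_, by rw [card_image_of_injOn hinj, ht.card_eq]⟩
  rw [coe_image]
  rintro _ ⟨x, hx, rfl⟩ _ ⟨y, hy, rfl⟩ hne
  exact f.map_adj (ht.isClique hx hy (ne_of_apply_ne f hne))

theorem pairwise_disjoint_edgeSet_of_adj_iff {G : ι → SimpleGraph V} (colour : V → V → ι)
    (h : ∀ i x y, (G i).Adj x y ↔ x ≠ y ∧ colour x y = i) :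
    Pairwise (Function.onFun Disjoint fun i => (G i).edgeSet) := by
  intro i j hij
  rw [Function.onFun, Set.disjoint_left]
  intro e hi hj
  induction e using Sym2.ind with
  | _ x y =>
    rw [mem_edgeSet, h] at hi hj
    exact hij (hi.2.symm.trans hj.2)

theorem iUnion_edgeSet_of_adj_iff {G : ι → SimpleGraph V} (colour : V → V → ι)
    (h : ∀ i x y, (G i).Adj x y ↔ x ≠ y ∧ colour x y = i) :
    ⋃ i, (G i).edgeSet = (⊤ : SimpleGraph V).edgeSet := by
  ext e
  induction e using Sym2.ind with
  | _ x y => simp [h]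

theorem ncard_edgeSet_comap_equiv (G : SimpleGraph W) (e : V ≃ W) :
    (G.comap e).edgeSet.ncard = G.edgeSet.ncard :=
  Nat.card_congr (Iso.comap e G).mapEdgeSet

theorem ncard_edgeSet_eq_card_edgeFinset (G : SimpleGraph V) [Fintype G.edgeSet] :
    G.edgeSet.ncard = #G.edgeFinset := by
  rw [← coe_edgeFinset, Set.ncard_coe_finset]

section BlowUp

variable [Fintype V] (H : SimpleGraph V) [DecidableRel H.Adj] (F : Type*) [Fintype F]

theorem degree_comap_fst (v : V) (t : F) :
    (H.comap (Prod.fst : V × F → V)).degree (v, t) = H.degree v * Fintype.card F := by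
  have : (H.comap (Prod.fst : V × F → V)).neighborFinset (v, t) = H.neighborFinset v ×ˢ univ := by
    ext; simp
  rw [← card_neighborFinset_eq_degree, this, card_product, card_neighborFinset_eq_degree, card_univ]

theorem card_edgeFinset_comap_fst :
    #(H.comap (Prod.fst : V × F → V)).edgeFinset = Fintype.card F ^ 2 * #H.edgeFinset := by
  classical
  have : 2 * #(H.comap (Prod.fst : V × F → V)).edgeFinset =
      2 * (Fintype.card F ^ 2 * #H.edgeFinset) := calc
    _ = ∑ v : V, ∑ _t : F, H.degree v * Fintype.card F := by
      simp only [← sum_degrees_eq_twice_card_edges, Fintype.sum_prod_type, degree_comap_fst]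
    _ = Fintype.card F ^ 2 * ∑ v, H.degree v := by
      simp only [sum_const, card_univ, smul_eq_mul, mul_sum]
      exact sum_congr rfl fun v _ => by ring
    _ = _ := by rw [sum_degrees_eq_twice_card_edges]; ring
  omega

end BlowUp

section FiberMatching

variable (V) [Fintype V]

theorem degree_bot_boxProd_top (v : V × Fin 2)
    [Fintype (((⊥ : SimpleGraph V) □ (⊤ : SimpleGraph (Fin 2))).neighborSet v)] :
    ((⊥ : SimpleGraph V) □ (⊤ : SimpleGraph (Fin 2))).degree v = 1 := by
  rw [degree_boxProd, bot_degree, complete_graph_degree, Fintype.card_fin]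

theorem ncard_edgeSet_bot_boxProd_top :
    ((⊥ : SimpleGraph V) □ (⊤ : SimpleGraph (Fin 2))).edgeSet.ncard = Fintype.card V := by
  classical
  rw [ncard_edgeSet_eq_card_edgeFinset]
  have := sum_degrees_eq_twice_card_edges ((⊥ : SimpleGraph V) □ (⊤ : SimpleGraph (Fin 2)))
  simp only [degree_bot_boxProd_top, sum_const, card_univ, Fintype.card_prod, Fintype.card_fin,
    smul_eq_mul] at this
  omega

end FiberMatching

theorem cliqueFree_bot_boxProd_top (V : Type*) :
    ((⊥ : SimpleGraph V) □ (⊤ : SimpleGraph (Fin 2))).CliqueFree 3 :=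
  (cliqueFree_of_card_lt (by simp) : (⊤ : SimpleGraph (Fin 2)).CliqueFree 3).of_hom
    ⟨Prod.snd, fun h => by simp_all [boxProd_adj]⟩

end SimpleGraph

namespace ZMod

variable {k : ℕ}

theorem two_mul_ne_two_mul_add_one (x y : ZMod (2 * k)) : 2 * x ≠ 2 * y + 1 := by
  intro h
  have h2 := congrArg (castHom (dvd_mul_right 2 k) (ZMod 2)) h
  rw [map_add, map_mul, map_mul, map_one, map_ofNat] at h2
  have hz : ∀ z : ZMod 2, 2 * z = 0 := by decide
  rw [hz, hz] at h2
  exact zero_ne_one h2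

variable [NeZero k]

theorem val_div_two_eq_iff {c : ℕ} (hc : c < k) (s : ZMod (2 * k)) :
    s.val / 2 = c ↔ s = 2 * c ∨ s = 2 * c + 1 := by
  have hval : ∀ m < 2 * k, s.val = m ↔ s = m := fun m hm =>
    ⟨fun h => by rw [← h, natCast_zmod_val], fun h => by rw [h, val_natCast_of_lt hm]⟩
  rw [show s.val / 2 = c ↔ s.val = 2 * c ∨ s.val = 2 * c + 1 by omega,
    hval _ (by omega), hval _ (by omega)]
  push_cast
  rfl

theorem two_mul_eq_zero_iff_eq_zero_or_eq (x : ZMod (2 * k)) : 2 * x = 0 ↔ x = 0 ∨ x = k := by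
  have hk : x = k ↔ 2 * x.val = 2 * k :=
    ⟨fun h => by rw [h, val_natCast_of_lt (by have := NeZero.pos k; omega)],
      fun h => by rw [← natCast_zmod_val x, show x.val = k by omega]⟩
  calc 2 * x = 0 ↔ -x = x := by rw [neg_eq_iff_add_eq_zero, ← two_mul]
    _ ↔ x = 0 ∨ 2 * x.val = 2 * k := neg_eq_self_iff x
    _ ↔ x = 0 ∨ x = k := by rw [hk]

theorem card_filter_two_mul_eq (c : ZMod (2 * k)) : #{p : ZMod (2 * k) | 2 * p = 2 * c} = 2 := by
  have hk : (k : ZMod (2 * k)) ≠ 0 := by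
    rw [ne_eq, ← val_eq_zero, val_natCast_of_lt (by have := NeZero.pos k; omega)]
    exact NeZero.ne k
  have : ({p : ZMod (2 * k) | 2 * p = 2 * c} : Finset _) = {c, c + k} := by
    ext p
    rw [mem_filter_univ, mem_insert, mem_singleton, ← sub_eq_zero, ← mul_sub,
      two_mul_eq_zero_iff_eq_zero_or_eq, sub_eq_zero, sub_eq_iff_eq_add']
  rw [this, card_pair (by simpa using hk)]

end ZMod

namespace SimpleGraph

def halfSumGraph (n c : ℕ) : SimpleGraph (ZMod n) where
  Adj p q := p ≠ q ∧ (p + q).val / 2 = c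
  symm := ⟨by rintro p q ⟨hne, h⟩; exact ⟨hne.symm, by rwa [add_comm]⟩⟩
  loopless := ⟨fun _ h => h.1 rfl⟩

instance (n c : ℕ) : DecidableRel (halfSumGraph n c).Adj :=
  fun _ _ => inferInstanceAs (Decidable (_ ∧ _))

theorem halfSumGraph_cliqueFree (n c : ℕ) [NeZero n] : (halfSumGraph n c).CliqueFree 3 := by
  intro t ht
  obtain ⟨x, y, z, ⟨hxy, sxy⟩, ⟨hxz, sxz⟩, ⟨hyz, syz⟩, -⟩ := is3Clique_iff.1 ht
  have : (x + y).val = (x + z).val ∨ (x + y).val = (y + z).val ∨ (x + z).val = (y + z).val := by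
    omega
  rcases this with h | h | h <;> replace h := ZMod.val_injective n h
  · exact hyz (by linear_combination h)
  · exact hxz (by linear_combination h)
  · exact hxy (by linear_combination h)

def decompositionGraph (k : ℕ) : Fin (k + 1) → SimpleGraph (ZMod (2 * k) × Fin 2) :=
  Fin.lastCases (⊥ □ ⊤) fun c => (halfSumGraph (2 * k) c).comap Prod.fst

variable {k : ℕ}

@[simp]
theorem decompositionGraph_last : decompositionGraph k (Fin.last k) = (⊥ □ ⊤) :=
  Fin.lastCases_last

@[simp]
theorem decompositionGraph_castSucc (c : Fin k) :
    decompositionGraph k c.castSucc = (halfSumGraph (2 * k) c).comap Prod.fst :=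
  Fin.lastCases_castSucc c

variable [NeZero k] {c : ℕ}

theorem halfSumGraph_adj_iff (hc : c < k) {p q : ZMod (2 * k)} :
    (halfSumGraph (2 * k) c).Adj p q ↔ p ≠ q ∧ (p + q = 2 * c ∨ p + q = 2 * c + 1) := by
  rw [← ZMod.val_div_two_eq_iff hc]
  rfl

theorem degree_halfSumGraph (hc : c < k) (p : ZMod (2 * k)) :
    (halfSumGraph (2 * k) c).degree p = if 2 * p = 2 * c then 1 else 2 := by
  have hne : (2 * c - p : ZMod (2 * k)) ≠ 2 * c + 1 - p := fun h =>
    ZMod.two_mul_ne_two_mul_add_one (c : ZMod (2 * k)) c (by linear_combination h)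
  have hodd : p ≠ 2 * c + 1 - p := fun h =>
    ZMod.two_mul_ne_two_mul_add_one p c (by linear_combination h)
  have : (halfSumGraph (2 * k) c).neighborFinset p =
      ({2 * c - p, 2 * c + 1 - p} : Finset _).erase p := by
    ext q
    rw [mem_neighborFinset, halfSumGraph_adj_iff hc, mem_erase, mem_insert, mem_singleton, ne_comm,
      eq_sub_iff_add_eq', eq_sub_iff_add_eq']
  rw [← card_neighborFinset_eq_degree, this]
  split_ifs with h
  · rw [card_erase_of_mem (mem_insert.2 (Or.inl (by linear_combination h))), card_pair hne]
  · have hp : p ∉ ({2 * c - p, 2 * c + 1 - p} : Finset _) := by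
      rw [mem_insert, mem_singleton, not_or]
      exact ⟨fun h' => h (by linear_combination h'), hodd⟩
    rw [erase_eq_of_notMem hp, card_pair hne]

theorem card_edgeFinset_halfSumGraph (hc : c < k) :
    #(halfSumGraph (2 * k) c).edgeFinset = 2 * k - 1 := by
  have hsplit := card_filter_add_card_filter_not (s := univ) fun p : ZMod (2 * k) => 2 * p = 2 * c
  rw [ZMod.card_filter_two_mul_eq, card_univ, ZMod.card] at hsplit
  have := sum_degrees_eq_twice_card_edges (halfSumGraph (2 * k) c)
  simp only [degree_halfSumGraph hc, sum_ite, sum_const, ZMod.card_filter_two_mul_eq,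
    smul_eq_mul] at this
  omega

variable (k) in
def decompositionColour (x y : ZMod (2 * k) × Fin 2) : Fin (k + 1) :=
  if x.1 = y.1 then Fin.last k
  else Fin.castSucc ⟨(x.1 + y.1).val / 2, by have := (x.1 + y.1).val_lt; omega⟩

theorem decompositionGraph_adj_iff (i : Fin (k + 1)) (x y : ZMod (2 * k) × Fin 2) :
    (decompositionGraph k i).Adj x y ↔ x ≠ y ∧ decompositionColour k x y = i := by
  induction i using Fin.lastCases with
  | last =>
    by_cases h : x.1 = y.1
    · simp [decompositionColour, boxProd_adj, Prod.ext_iff, h]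
    · simp [decompositionColour, boxProd_adj, h, -Fin.castSucc_mk, Fin.castSucc_ne_last]
  | cast c =>
    by_cases h : x.1 = y.1
    · simp [decompositionColour, halfSumGraph, h, (Fin.castSucc_ne_last c).symm]
    · simp [decompositionColour, halfSumGraph, h, Fin.ext_iff, Prod.ext_iff]

theorem decompositionGraph_cliqueFree (i : Fin (k + 1)) :
    (decompositionGraph k i).CliqueFree 3 := by
  induction i using Fin.lastCases with
  | last => simpa using cliqueFree_bot_boxProd_top _
  | cast c => simpa using (halfSumGraph_cliqueFree _ c).of_hom (Hom.comap Prod.fst _)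

end SimpleGraph

/-- For every `k ≥ 2`, the edges of `K_{4k}` can be partitioned into `k+1`
triangle-free subgraphs `G_1, …, G_{k+1}` where each of `G_1, …, G_k` has exactly
`8k - 4` edges and `G_{k+1}` is a perfect matching (with `2k` edges). -/
theorem K4k_decomposition (k : ℕ) (hk : 2 ≤ k) :
    ∃ G : Fin (k + 1) → SimpleGraph (Fin (4 * k)),
      Pairwise (Function.onFun Disjoint fun i => (G i).edgeSet) ∧
      (⋃ i, (G i).edgeSet) = (⊤ : SimpleGraph (Fin (4 * k))).edgeSet ∧
      (∀ i, (G i).CliqueFree 3) ∧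
      (∀ i, i ≠ Fin.last k → ((G i).edgeSet).ncard = 8 * k - 4) ∧
      (∀ v, ∃! w, (G (Fin.last k)).Adj v w) ∧
      ((G (Fin.last k)).edgeSet).ncard = 2 * k := by
  have : NeZero k := ⟨by omega⟩
  let e : Fin (4 * k) ≃ ZMod (2 * k) × Fin 2 :=
    Fintype.equivOfCardEq (by simp only [Fintype.card_fin, Fintype.card_prod, ZMod.card]; ring)
  have hadj (i : Fin (k + 1)) (x y : Fin (4 * k)) : ((decompositionGraph k i).comap e).Adj x y ↔
      x ≠ y ∧ decompositionColour k (e x) (e y) = i := by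
    rw [comap_adj, decompositionGraph_adj_iff, e.injective.ne_iff]
  refine ⟨fun i => (decompositionGraph k i).comap e, pairwise_disjoint_edgeSet_of_adj_iff _ hadj,
    iUnion_edgeSet_of_adj_iff _ hadj,
    fun i => (decompositionGraph_cliqueFree i).of_hom (Hom.comap e _), fun i hi => ?_, fun v => ?_, ?_⟩
  · obtain ⟨c, rfl⟩ := Fin.exists_castSucc_eq.2 hi
    rw [ncard_edgeSet_comap_equiv, decompositionGraph_castSucc, ncard_edgeSet_eq_card_edgeFinset,
      card_edgeFinset_comap_fst, card_edgeFinset_halfSumGraph c.isLt, Fintype.card_fin]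
    omega
  · simp only [comap_adj, decompositionGraph_last]
    exact e.existsUnique_congr_right.2
      (degree_eq_one_iff_existsUnique_adj.1 (degree_bot_boxProd_top _ _))
  · rw [ncard_edgeSet_comap_equiv, decompositionGraph_last, ncard_edgeSet_bot_boxProd_top,
      ZMod.card]
end

section
/- For every integer k ≥ 2, the edge set of the complete graph K_{4k−1} can be partitioned into k+1 subgraphs each of girth at least 4. -/
/-!
Colour the edge `uv` of the complete graph on `{0, …, n - 1}`, where `n ≤ 2 ^ m`, by the most
significant binary digit in which `u` and `v` differ. There are `m` colours, and colour class `i`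
is bipartite, with sides the vertices whose `i`-th digit is `0`, resp. `1`; so it is
triangle-free. Since `4k - 1 ≤ 2 ^ (k + 1)`, this gives `k + 1` classes for `K_{4k-1}`.
-/

theorem Nat.four_mul_sub_one_le_two_pow_succ (k : ℕ) : 4 * k - 1 ≤ 2 ^ (k + 1) := by
  induction k with
  | zero => simp
  | succ k ih =>
    have := Nat.lt_two_pow_self (n := k)
    rw [pow_succ] at ih ⊢
    omega

namespace SimpleGraph

def highBitGraph (i : ℕ) : SimpleGraph ℕ where
  Adj u v := u ≠ v ∧ (u ^^^ v).log2 = i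
  symm := ⟨fun u v h => ⟨h.1.symm, Nat.xor_comm v u ▸ h.2⟩⟩
  loopless := ⟨fun _ h => h.1 rfl⟩

variable {i j : ℕ}

theorem testBit_ne_of_highBitGraph_adj {u v : ℕ} (h : (highBitGraph i).Adj u v) :
    u.testBit i ≠ v.testBit i := by
  obtain ⟨huv, hlog⟩ := h
  have := Nat.testBit_log2 (Nat.xor_ne_zero_iff.mpr huv)
  rw [hlog, Nat.testBit_xor] at this
  simpa using this

def highBitGraph.coloring (i : ℕ) : (highBitGraph i).Coloring Bool :=
  Coloring.mk (fun v => v.testBit i) testBit_ne_of_highBitGraph_adj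

theorem highBitGraph_cliqueFree_three : (highBitGraph i).CliqueFree 3 :=
  (highBitGraph.coloring i).colorable.cliqueFree (by simp)

theorem disjoint_highBitGraph (hij : i ≠ j) : Disjoint (highBitGraph i) (highBitGraph j) :=
  disjoint_left.mpr fun _ _ ⟨_, hi⟩ ⟨_, hj⟩ => hij (hi.symm.trans hj)

theorem exists_highBitGraph_adj {m u v : ℕ} (hu : u < 2 ^ m) (hv : v < 2 ^ m) (huv : u ≠ v) :
    ∃ i < m, (highBitGraph i).Adj u v :=
  ⟨_, (Nat.log2_lt (Nat.xor_ne_zero_iff.mpr huv)).mpr (Nat.xor_lt_two_pow hu hv), huv, rfl⟩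

theorem exists_cliqueFree_three_edgeSet_partition {n m : ℕ} (hn : n ≤ 2 ^ m) :
    ∃ G : Fin m → SimpleGraph (Fin n),
      Pairwise (Function.onFun Disjoint fun i => (G i).edgeSet) ∧
      (⋃ i, (G i).edgeSet) = (⊤ : SimpleGraph (Fin n)).edgeSet ∧
      ∀ i, (G i).CliqueFree 3 := by
  refine ⟨fun i => (highBitGraph i).comap Fin.val, fun i j hij => ?_, ?_, fun i => ?_⟩
  · exact disjoint_edgeSet.mpr <| disjoint_left.mpr fun u v =>
      disjoint_left.mp (disjoint_highBitGraph (Fin.val_ne_of_ne hij)) u v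
  · rw [← edgeSet_iSup]
    congr 1
    ext u v
    simp only [iSup_adj, comap_adj, top_adj]
    refine ⟨fun ⟨_, huv, _⟩ => Fin.ne_of_val_ne huv, fun huv => ?_⟩
    obtain ⟨i, hi, h⟩ := exists_highBitGraph_adj (u.2.trans_le hn) (v.2.trans_le hn)
      (Fin.val_ne_of_ne huv)
    exact ⟨⟨i, hi⟩, h⟩
  · exact highBitGraph_cliqueFree_three.comap (Embedding.comap Fin.valEmbedding _).isContained

end SimpleGraph

theorem K4k_sub_one_decomposition_general (k : ℕ) :
    ∃ G : Fin (k + 1) → SimpleGraph (Fin (4 * k - 1)),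
      Pairwise (Function.onFun Disjoint fun i => (G i).edgeSet) ∧
      (⋃ i, (G i).edgeSet) = (⊤ : SimpleGraph (Fin (4 * k - 1))).edgeSet ∧
      ∀ i, (G i).CliqueFree 3 :=
  SimpleGraph.exists_cliqueFree_three_edgeSet_partition (Nat.four_mul_sub_one_le_two_pow_succ k)

/-- For every `k ≥ 2`, the edges of `K_{4k-1}` can be partitioned into `k+1`
triangle-free subgraphs. -/
theorem K4k_sub_one_decomposition (k : ℕ) (hk : 2 ≤ k) :
    ∃ G : Fin (k + 1) → SimpleGraph (Fin (4 * k - 1)),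
      Pairwise (Function.onFun Disjoint fun i => (G i).edgeSet) ∧
      (⋃ i, (G i).edgeSet) = (⊤ : SimpleGraph (Fin (4 * k - 1))).edgeSet ∧
      ∀ i, (G i).CliqueFree 3 :=
  K4k_sub_one_decomposition_general k
end

section
/- For every integer k ≥ 3, the edge set of the complete graph K_{4k+1} can be partitioned into k+1 subgraphs each of girth at least 4. -/
/-!
Colour the edge `uv` by the position of the highest bit in which the binary expansions of `u`
and `v` differ. Among vertices below `2 ^ m` only the positions `0, …, m - 1` occur, and the
colour class `i` is bipartite, with the vertices whose bit `i` is set on one side, so it is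
triangle-free. Since `4k + 1 ≤ 2 ^ (k + 1)` for `k ≥ 3`, this handles `K_{4k+1}`.
-/

namespace Nat

def topDiffBitGraph (i : ℕ) : SimpleGraph ℕ where
  Adj u v := u ≠ v ∧ (u ^^^ v).log2 = i
  symm := ⟨fun u v h => ⟨h.1.symm, Nat.xor_comm u v ▸ h.2⟩⟩
  loopless := ⟨fun _ h => h.1 rfl⟩

@[simp]
theorem topDiffBitGraph_adj {i u v : ℕ} :
    (topDiffBitGraph i).Adj u v ↔ u ≠ v ∧ (u ^^^ v).log2 = i :=
  Iff.rfl

def topDiffBitGraph.coloring (i : ℕ) : (topDiffBitGraph i).Coloring Bool :=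
  SimpleGraph.Coloring.mk (fun u => u.testBit i) fun {u v} hadj => by
    obtain ⟨huv, hi⟩ := topDiffBitGraph_adj.mp hadj
    have hbit : (u ^^^ v).testBit i = true := hi ▸ testBit_log2 (xor_ne_zero_iff.mpr huv)
    rw [testBit_xor] at hbit
    exact fun h => by simp [h] at hbit

theorem topDiffBitGraph_colorable (i : ℕ) : (topDiffBitGraph i).Colorable 2 :=
  (topDiffBitGraph.coloring i).colorable

theorem log2_xor_lt_of_lt_two_pow {u v m : ℕ} (hne : u ≠ v) (hu : u < 2 ^ m) (hv : v < 2 ^ m) :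
    (u ^^^ v).log2 < m :=
  (log2_lt (xor_ne_zero_iff.mpr hne)).mpr (xor_lt_two_pow hu hv)

theorem four_mul_add_one_le_two_pow {k : ℕ} (hk : 3 ≤ k) : 4 * k + 1 ≤ 2 ^ (k + 1) := by
  induction k, hk using le_induction with
  | base => norm_num
  | succ k _ ih => rw [pow_succ]; omega

end Nat

open SimpleGraph in
theorem exists_triangleFree_edgeSet_partition_of_le_two_pow {n m : ℕ} (hn : n ≤ 2 ^ m) :
    ∃ G : Fin m → SimpleGraph (Fin n),
      Pairwise (Function.onFun Disjoint fun i => (G i).edgeSet) ∧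
      (⋃ i, (G i).edgeSet) = (⊤ : SimpleGraph (Fin n)).edgeSet ∧
      ∀ i, (G i).CliqueFree 3 := by
  refine ⟨fun i => (Nat.topDiffBitGraph i).comap Fin.val, ?_, ?_, fun i => ?_⟩
  · intro i j hij
    rw [Function.onFun, disjoint_edgeSet, disjoint_iff_inf_le]
    intro u v hadj
    simp only [inf_adj, comap_adj, Nat.topDiffBitGraph_adj] at hadj
    exact hij (Fin.ext (hadj.1.2 ▸ hadj.2.2))
  · rw [← edgeSet_iSup, edgeSet_inj]
    ext u v
    simp only [iSup_adj, comap_adj, Nat.topDiffBitGraph_adj, top_adj]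
    refine ⟨fun ⟨_, huv, _⟩ => Fin.val_injective.ne_iff.mp huv, fun huv => ?_⟩
    have hne : u.val ≠ v.val := Fin.val_injective.ne huv
    exact ⟨⟨_, Nat.log2_xor_lt_of_lt_two_pow hne (u.2.trans_le hn) (v.2.trans_le hn)⟩, hne, rfl⟩
  · exact ((Nat.topDiffBitGraph_colorable i).of_hom (Hom.comap Fin.val _)).cliqueFree
      (by norm_num)

/-- For every `k ≥ 3`, the edges of `K_{4k+1}` can be partitioned into `k+1`
triangle-free subgraphs. -/
theorem K4k_add_one_decomposition (k : ℕ) (hk : 3 ≤ k) :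
    ∃ G : Fin (k + 1) → SimpleGraph (Fin (4 * k + 1)),
      Pairwise (Function.onFun Disjoint fun i => (G i).edgeSet) ∧
      (⋃ i, (G i).edgeSet) = (⊤ : SimpleGraph (Fin (4 * k + 1))).edgeSet ∧
      ∀ i, (G i).CliqueFree 3 :=
  exists_triangleFree_edgeSet_partition_of_le_two_pow (Nat.four_mul_add_one_le_two_pow hk)
end

section
/- For every integer n ≥ 1 with n ≠ 6 and n ≠ 10, the edge set of the complete graph K_n can be partitioned into ⌈(n+2)/4⌉ subgraphs each of girth at least 4. (This is the constructive upper-bound content of the main theorem θ(4,K_n) = ⌈(n+2)/4⌉ for n ≠ 6, 10.) -/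
/-!
Colour the edge `uv` of `K_n` on `{0, …, n-1}` by a colour of `|u - v|`. Among three integers one
difference is the sum of the other two, so every colour class is triangle-free as soon as the
colouring of the positive integers is sum-free. The dyadic blocks `[2^t, 2^(t+1))` are sum-free;
moving `4` into the block `{1}` and `8` into `{2, 3}` keeps them sum-free and saves enough colours
that the differences `1, …, n-1` need at most `⌈(n+2)/4⌉` colours unless `n = 6` or `n = 10`.
-/

def IsSumFreeColoring {ι : Type*} (c : ℕ → ι) : Prop :=
  ∀ ⦃a b : ℕ⦄, 0 < a → 0 < b → c a = c b → c (a + b) ≠ c a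

lemma Nat.dist_eq_add_dist_or (x y z : ℕ) :
    Nat.dist x z = Nat.dist x y + Nat.dist y z ∨
    Nat.dist y z = Nat.dist x y + Nat.dist x z ∨
    Nat.dist x y = Nat.dist x z + Nat.dist y z := by
  simp only [Nat.dist]
  omega

lemma Nat.log2_add_of_log2_eq {a b : ℕ} (ha : a ≠ 0) (hb : b ≠ 0) (hab : a.log2 = b.log2) :
    (a + b).log2 = a.log2 + 1 := by
  obtain ⟨ha₁, ha₂⟩ : 2 ^ a.log2 ≤ a ∧ a < 2 ^ (a.log2 + 1) :=
    ⟨Nat.log2_self_le ha, Nat.lt_log2_self⟩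
  obtain ⟨hb₁, hb₂⟩ : 2 ^ a.log2 ≤ b ∧ b < 2 ^ (a.log2 + 1) :=
    hab ▸ ⟨Nat.log2_self_le hb, Nat.lt_log2_self⟩
  have hne : a + b ≠ 0 := by omega
  have hpow := Nat.pow_succ 2 a.log2
  have hpow' := Nat.pow_succ 2 (a.log2 + 1)
  exact le_antisymm (Nat.le_of_lt_succ ((Nat.log2_lt hne).2 (by omega)))
    ((Nat.le_log2 hne).2 (by omega))

lemma four_mul_le_two_pow {k : ℕ} (hk : 4 ≤ k) : 4 * k ≤ 2 ^ k := by
  induction k, hk using Nat.le_induction with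
  | base => norm_num
  | succ k hk ih =>
    have : 4 ≤ 2 ^ k := le_trans (by norm_num) (Nat.pow_le_pow_right two_pos hk)
    rw [pow_succ]
    omega

section DistColorGraph

variable {ι : Type*} (n : ℕ) (c : ℕ → ι)

def distColorGraph (i : ι) : SimpleGraph (Fin n) where
  Adj u v := u ≠ v ∧ c (Nat.dist u v) = i
  symm := ⟨fun u v h => ⟨h.1.symm, Nat.dist_comm (v : ℕ) u ▸ h.2⟩⟩
  loopless := ⟨fun _ h => h.1 rfl⟩

lemma pairwise_disjoint_edgeSet_distColorGraph :
    Pairwise (Function.onFun Disjoint fun i => (distColorGraph n c i).edgeSet) := by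
  intro i j hij
  refine Set.disjoint_left.2 fun e => ?_
  induction e using Sym2.ind with
  | _ u v => exact fun hi hj => hij (hi.2.symm.trans hj.2)

lemma iUnion_edgeSet_distColorGraph {κ : Type*} (f : κ → ι)
    (hf : ∀ d, 0 < d → d < n → c d ∈ Set.range f) :
    (⋃ k, (distColorGraph n c (f k)).edgeSet) = (⊤ : SimpleGraph (Fin n)).edgeSet := by
  ext e
  induction e using Sym2.ind with
  | _ u v =>
    simp only [Set.mem_iUnion, SimpleGraph.mem_edgeSet, SimpleGraph.top_adj]
    refine ⟨fun ⟨_, huv, _⟩ => huv, fun huv => ?_⟩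
    have hdist : Nat.dist u v < n := by
      have := u.isLt
      have := v.isLt
      simp only [Nat.dist]
      omega
    obtain ⟨k, hk⟩ := hf _ (Nat.dist_pos_of_ne (Fin.val_injective.ne huv)) hdist
    exact ⟨k, huv, hk.symm⟩

variable {n c}

lemma IsSumFreeColoring.cliqueFree_three_distColorGraph (hc : IsSumFreeColoring c) (i : ι) :
    (distColorGraph n c i).CliqueFree 3 := by
  intro s hs
  obtain ⟨x, y, z, ⟨hxy, cxy⟩, ⟨hxz, cxz⟩, ⟨hyz, cyz⟩, -⟩ := SimpleGraph.is3Clique_iff.1 hs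
  have pxy := Nat.dist_pos_of_ne (Fin.val_injective.ne hxy)
  have pxz := Nat.dist_pos_of_ne (Fin.val_injective.ne hxz)
  have pyz := Nat.dist_pos_of_ne (Fin.val_injective.ne hyz)
  rcases Nat.dist_eq_add_dist_or x y z with h | h | h
  · exact hc pxy pyz (cxy.trans cyz.symm) (by rw [← h, cxz, cxy])
  · exact hc pxy pxz (cxy.trans cxz.symm) (by rw [← h, cyz, cxy])
  · exact hc pxz pyz (cxz.trans cyz.symm) (by rw [← h, cxy, cxz])

end DistColorGraph

/-- The colour classes are `{1, 4}`, `{2, 3, 8}` and `[2^t, 2^(t+1)) \ {4, 8}` for `t ≥ 2`. -/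
def dyadicColoring (d : ℕ) : ℕ := if d = 4 then 0 else if d = 8 then 1 else d.log2

lemma dyadicColoring_of_two_le {d : ℕ} (h : 2 ≤ dyadicColoring d) : dyadicColoring d = d.log2 := by
  unfold dyadicColoring at h ⊢
  split_ifs at h ⊢ <;> omega

lemma dyadicColoring_le_log2 (d : ℕ) : dyadicColoring d ≤ d.log2 := by
  unfold dyadicColoring
  split_ifs with h4 h8
  · exact Nat.zero_le _
  · subst h8; decide
  · exact le_rfl

lemma le_eight_of_dyadicColoring_le_one {d : ℕ} (hd : d ≠ 0) (h : dyadicColoring d ≤ 1) : d ≤ 8 := by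
  unfold dyadicColoring at h
  split_ifs at h with h4 h8
  · omega
  · omega
  · have := (Nat.log2_lt hd).1 (Nat.lt_succ_of_le h)
    omega

lemma isSumFreeColoring_dyadicColoring : IsSumFreeColoring dyadicColoring := by
  intro a b ha hb hab
  by_cases hsmall : dyadicColoring a ≤ 1
  · have ha8 := le_eight_of_dyadicColoring_le_one ha.ne' hsmall
    have hb8 := le_eight_of_dyadicColoring_le_one hb.ne' (hab ▸ hsmall)
    have hcheck : ∀ a ∈ Finset.Icc 1 8, ∀ b ∈ Finset.Icc 1 8, dyadicColoring a = dyadicColoring b →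
        dyadicColoring a ≤ 1 → dyadicColoring (a + b) ≠ dyadicColoring a := by
      decide
    exact hcheck a (Finset.mem_Icc.2 ⟨ha, ha8⟩) b (Finset.mem_Icc.2 ⟨hb, hb8⟩) hab hsmall
  · have ha2 : 2 ≤ dyadicColoring a := by omega
    have hb2 : 2 ≤ dyadicColoring b := hab ▸ ha2
    have hta := dyadicColoring_of_two_le ha2
    rw [hta, dyadicColoring_of_two_le hb2] at hab
    have hsum := Nat.log2_add_of_log2_eq ha.ne' hb.ne' hab
    rw [hta] at ha2 ⊢
    unfold dyadicColoring
    split_ifs <;> omega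

lemma dyadicColoring_lt {n d : ℕ} (h6 : n ≠ 6) (h10 : n ≠ 10) (hd : d < n) :
    dyadicColoring d < (n + 5) / 4 := by
  rcases lt_or_ge n 11 with hn | hn
  · have hcheck : ∀ m < 11, m ≠ 6 → m ≠ 10 → ∀ d < m, dyadicColoring d < (m + 5) / 4 := by
      decide
    exact hcheck n hn h6 h10 d hd
  · -- `k := (n + 5) / 4 ≥ 4` and `d < n ≤ 4 * k - 2 < 2 ^ k`
    have hpow := four_mul_le_two_pow (k := (n + 5) / 4) (by omega)
    refine (dyadicColoring_le_log2 d).trans_lt ?_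
    rcases eq_or_ne d 0 with rfl | hd0
    · simp only [Nat.log2_zero]
      omega
    · exact (Nat.log2_lt hd0).2 (by omega)

theorem Kn_decomposition_upper_bound_general (n : ℕ) (h6 : n ≠ 6) (h10 : n ≠ 10) :
    ∃ G : Fin ((n + 2 + 3) / 4) → SimpleGraph (Fin n),
      Pairwise (Function.onFun Disjoint fun i => (G i).edgeSet) ∧
      (⋃ i, (G i).edgeSet) = (⊤ : SimpleGraph (Fin n)).edgeSet ∧
      ∀ i, (G i).CliqueFree 3 :=
  ⟨fun i => distColorGraph n dyadicColoring i.val,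
    (pairwise_disjoint_edgeSet_distColorGraph n dyadicColoring).comp_of_injective
      Fin.val_injective,
    iUnion_edgeSet_distColorGraph n dyadicColoring Fin.val
      fun _ _ hd => ⟨⟨_, dyadicColoring_lt h6 h10 hd⟩, rfl⟩,
    fun _ => isSumFreeColoring_dyadicColoring.cliqueFree_three_distColorGraph _⟩

/-- Upper bound of the main theorem: for every `n ≥ 1` with `n ≠ 6` and `n ≠ 10`,
the edges of `K_n` can be partitioned into `⌈(n+2)/4⌉` triangle-free subgraphs.
Here `⌈(n+2)/4⌉ = (n + 2 + 3) / 4` in natural-number arithmetic. -/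
theorem Kn_decomposition_upper_bound (n : ℕ) (hn : 1 ≤ n) (h6 : n ≠ 6) (h10 : n ≠ 10) :
    ∃ G : Fin ((n + 2 + 3) / 4) → SimpleGraph (Fin n),
      Pairwise (Function.onFun Disjoint fun i => (G i).edgeSet) ∧
      (⋃ i, (G i).edgeSet) = (⊤ : SimpleGraph (Fin n)).edgeSet ∧
      ∀ i, (G i).CliqueFree 3 :=
  Kn_decomposition_upper_bound_general n h6 h10
end
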